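/- Let k and M be positive integers and let I ⊆ {1,...,k}. If W and W' are i.i.d. uniform on the lattice ball B_k^±(M), then P( W_i = W'_i for all i ∈ {1,...,k} \ I ) ≤ |B_{|I|}^±(M)| / |B_k^±(M)|. -/

import Mathlib

/-- Membership in the `L¹` lattice ball of radius `M` in dimension `k`
(undirected: `ℤ^k`; directed `undir = false`: `ℤ_{≥0}^k`). -/
def inBall (undir : Bool) {k : ℕ} (M : ℕ) (w : Fin k → ℤ) : Prop :=
  (∑ i, (w i).natAbs) ≤ M ∧ (undir = false → ∀ i, 0 ≤ w i)

/-- Cardinality of the `L¹` lattice ball of radius `M` in dimension `k`. -/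
noncomputable def latticeBallCard (undir : Bool) (k M : ℕ) : ℕ :=
  Nat.card {w : Fin k → ℤ // inBall undir M w}

/-! Pairs agreeing off `I` are determined by the first point together with the restriction of
the second to `I`, and restricting to `I` maps `B_k^±(M)` into `B_{|I|}^±(M)`. Hence there are at
most `|B_k^±(M)| · |B_{|I|}^±(M)|` such pairs. -/

section LatticeBall

variable {undir : Bool} {k M : ℕ}

theorem inBall.natAbs_le {w : Fin k → ℤ} (hw : inBall undir M w) (i : Fin k) :
    (w i).natAbs ≤ M :=
  (Finset.single_le_sum (fun j _ => Nat.zero_le (w j).natAbs) (Finset.mem_univ i)).trans hw.1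

theorem inBall.comp_embedding {m : ℕ} {w : Fin k → ℤ} (hw : inBall undir M w)
    (f : Fin m ↪ Fin k) : inBall undir M (w ∘ f) := by
  refine ⟨?_, fun h j => hw.2 h (f j)⟩
  calc ∑ j, (w (f j)).natAbs = ∑ i ∈ Finset.univ.map f, (w i).natAbs :=
        (Finset.sum_map _ _ fun i => (w i).natAbs).symm
    _ ≤ ∑ i, (w i).natAbs := Finset.sum_le_sum_of_subset (Finset.subset_univ _)
    _ ≤ M := hw.1

instance inBall.finite (undir : Bool) (k M : ℕ) : Finite {w : Fin k → ℤ // inBall undir M w} :=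
  Finite.of_injective (β := Fin k → Set.Icc (-(M : ℤ)) M)
    (fun w i => ⟨w.1 i, by have := w.2.natAbs_le i; constructor <;> omega⟩)
    fun _ _ h => Subtype.ext <| funext fun i => congrArg Subtype.val (congrFun h i)

theorem latticeBallCard_pos (undir : Bool) (k M : ℕ) : 0 < latticeBallCard undir k M :=
  have : Nonempty {w : Fin k → ℤ // inBall undir M w} := ⟨⟨0, by simp [inBall]⟩⟩
  Nat.card_pos

theorem card_pairs_eqOn_compl_le (I : Finset (Fin k)) :
    Nat.card {p : (Fin k → ℤ) × (Fin k → ℤ) //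
        inBall undir M p.1 ∧ inBall undir M p.2 ∧ ∀ i ∉ I, p.1 i = p.2 i} ≤
      latticeBallCard undir k M * latticeBallCard undir I.card M := by
  set e := I.orderEmbOfFin rfl
  rw [latticeBallCard, latticeBallCard, ← Nat.card_prod]
  refine Nat.card_le_card_of_injective
    (fun p => (⟨p.1.1, p.2.1⟩, ⟨p.1.2 ∘ e, p.2.2.1.comp_embedding e.toEmbedding⟩)) ?_
  rintro ⟨⟨a, b⟩, _, _, hab⟩ ⟨⟨a', b'⟩, _, _, hab'⟩ h
  simp only [Prod.mk.injEq, Subtype.mk.injEq] at h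
  obtain ⟨rfl, hb⟩ := h
  suffices b = b' by subst this; rfl
  funext i
  by_cases hi : i ∈ I
  · obtain ⟨j, rfl⟩ : i ∈ Set.range e := by rwa [Finset.range_orderEmbOfFin]
    exact congrFun hb j
  · exact (hab i hi).symm.trans (hab' i hi)

end LatticeBall

/-- If `W, W'` are i.i.d. uniform on `B_k^±(M)`, then
`P(Wᵢ = W'ᵢ for all i ∉ I) ≤ |B_{|I|}^±(M)|/|B_k^±(M)|`. -/
theorem statement17 :
    ∀ (undir : Bool) (k M : ℕ), 0 < k → 0 < M → ∀ I : Finset (Fin k),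
      (Nat.card {p : (Fin k → ℤ) × (Fin k → ℤ) //
          inBall undir M p.1 ∧ inBall undir M p.2 ∧ ∀ i ∉ I, p.1 i = p.2 i} : ℝ) /
        ((latticeBallCard undir k M : ℝ)) ^ 2 ≤
      (latticeBallCard undir I.card M : ℝ) / (latticeBallCard undir k M : ℝ) := by
  intro undir k M _ _ I
  have hB : (0 : ℝ) < latticeBallCard undir k M := by exact_mod_cast latticeBallCard_pos undir k M
  have hpairs := card_pairs_eqOn_compl_le (undir := undir) (M := M) I
  calc _ ≤ (latticeBallCard undir k M * latticeBallCard undir I.card M : ℝ) /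
        (latticeBallCard undir k M : ℝ) ^ 2 := by gcongr; exact_mod_cast hpairs
    _ = _ := by field_simp
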